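/- If u : 𝔻 → ℝ^m is harmonic, then |u| and |u'_t| (the norm of the angular derivative) are subharmonic functions on 𝔻, and consequently the length L(r) of the curve t ↦ u(re^{it}) and the diameter d(r) of u(D_r) are nondecreasing in r ∈ [0,1). -/

import Mathlib

/-!
Write `u = Re F` with `F` holomorphic; its angular derivative is then `Re G` with
`G z = i z F'(z)`, again holomorphic. For a real-linear image `L ∘ g` of a holomorphic `g`, the
Poisson formula for `g` and the triangle inequality give `‖L (g w)‖ ≤ ∫ P(w, ·) ‖L ∘ g‖` on every
disk containing `w`; at the centre this is the sub-mean-value inequality. Averaging the Poisson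
bound over a smaller concentric circle and exchanging the two averages shows that circle averages
of `‖L ∘ g‖` increase with the radius, since the Poisson kernel also has mean one in its pole.
-/

open Real Set Metric Complex

/-- A function `v` is subharmonic on `s` if it is continuous on `s` and satisfies the
sub-mean-value inequality on every closed disk contained in `s`. -/
def SubharmonicOn (v : ℂ → ℝ) (s : Set ℂ) : Prop :=
  ContinuousOn v s ∧
    ∀ c ∈ s, ∀ r : ℝ, 0 < r → Metric.closedBall c r ⊆ s →
      v c ≤ (2 * Real.pi)⁻¹ * ∫ t in (0 : ℝ)..(2 * Real.pi), v (c + r * Complex.exp (t * Complex.I))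

open Function

theorem norm_circleAverage_le_circleAverage_norm {E : Type*} [NormedAddCommGroup E]
    [NormedSpace ℝ E] (f : ℂ → E) (c : ℂ) (R : ℝ) :
    ‖circleAverage f c R‖ ≤ circleAverage (fun z ↦ ‖f z‖) c R := by
  rw [circleAverage, circleAverage, norm_smul, smul_eq_mul, norm_inv,
    Real.norm_of_nonneg two_pi_pos.le]
  gcongr
  exact intervalIntegral.norm_integral_le_integral_norm two_pi_pos.le

theorem intervalIntegral_mul_exp_eq_two_pi_smul_circleAverage {E : Type*} [NormedAddCommGroup E]
    [NormedSpace ℝ E] (f : ℂ → E) (r : ℝ) :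
    ∫ t in (0 : ℝ)..(2 * π), f (r * exp (t * I)) = (2 * π) • circleAverage f 0 r := by
  rw [circleAverage_def, smul_inv_smul₀ two_pi_pos.ne']
  simp [circleMap]

section CircleAverageComm

variable {c₁ c₂ : ℂ} {r₁ r₂ : ℝ}

theorem ContinuousOn.continuous_uncurry_circleMap {X : Type*} [TopologicalSpace X]
    {K : ℂ → ℂ → X} (hK : ContinuousOn (uncurry K) (sphere c₁ |r₁| ×ˢ sphere c₂ |r₂|)) :
    Continuous fun p : ℝ × ℝ ↦ K (circleMap c₁ r₁ p.1) (circleMap c₂ r₂ p.2) :=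
  hK.comp_continuous (f := fun p : ℝ × ℝ ↦ (circleMap c₁ r₁ p.1, circleMap c₂ r₂ p.2))
    (by fun_prop) fun p ↦ ⟨circleMap_mem_sphere' c₁ r₁ p.1, circleMap_mem_sphere' c₂ r₂ p.2⟩

variable {E : Type*} [NormedAddCommGroup E] [NormedSpace ℝ E] {K : ℂ → ℂ → E}

theorem ContinuousOn.circleIntegrable_circleAverage
    (hK : ContinuousOn (uncurry K) (sphere c₁ |r₁| ×ˢ sphere c₂ |r₂|)) :
    CircleIntegrable (fun w ↦ circleAverage (K w) c₂ r₂) c₁ r₁ :=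
  ((intervalIntegral.continuous_parametric_intervalIntegral_of_continuous'
    hK.continuous_uncurry_circleMap 0 (2 * π)).const_smul _).intervalIntegrable _ _

theorem circleAverage_circleAverage_comm [CompleteSpace E]
    (hK : ContinuousOn (uncurry K) (sphere c₁ |r₁| ×ˢ sphere c₂ |r₂|)) :
    circleAverage (fun w ↦ circleAverage (K w) c₂ r₂) c₁ r₁ =
      circleAverage (fun z ↦ circleAverage (K · z) c₁ r₁) c₂ r₂ := by
  simp only [circleAverage_def, intervalIntegral.integral_smul]
  rw [MeasureTheory.intervalIntegral_intervalIntegral_swap]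
  exact hK.continuous_uncurry_circleMap.continuousOn.integrableOn_compact
    (isCompact_uIcc.prod isCompact_uIcc) |>.mono_set (prod_mono uIoc_subset_uIcc uIoc_subset_uIcc)

end CircleAverageComm

section Poisson

variable {c w z : ℂ} {r R : ℝ}

theorem poissonKernel_nonneg (hz : z ∈ sphere c R) (hw : w ∈ ball c R) :
    0 ≤ poissonKernel c w z := by
  rw [mem_sphere_iff_norm] at hz
  rw [mem_ball_iff_norm] at hw
  have := norm_nonneg (w - c)
  exact div_nonneg (by nlinarith) (sq_nonneg _)

theorem continuousOn_poissonKernel_sphere (hw : w ∈ ball c R) :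
    ContinuousOn (poissonKernel c w) (sphere c |R|) := by
  rw [poissonKernel_eq_re_herglotzRieszKernel]
  exact continuous_re.comp_continuousOn (continuousOn_herglotzRieszKernel_sphere hw)

theorem continuousOn_uncurry_poissonKernel (hrR : |r| < R) :
    ContinuousOn (uncurry (poissonKernel c)) (sphere c |r| ×ˢ sphere c |R|) := by
  refine ContinuousOn.div (by fun_prop) (by fun_prop) fun p hp ↦ pow_ne_zero 2 ?_
  have hpw : ‖p.1 - c‖ = |r| := mem_sphere_iff_norm.1 hp.1
  have hpz : ‖p.2 - c‖ = |R| := mem_sphere_iff_norm.1 hp.2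
  rw [Ne, norm_eq_zero, sub_eq_zero]
  intro h
  rw [h, hpw] at hpz
  exact (hrR.trans_le (le_abs_self R)).ne hpz

/-- The average is taken over the pole `w`, not over the boundary point `z`: it is the mean value
property of the holomorphic function `w ↦ herglotzRieszKernel c w z`. -/
theorem circleAverage_poissonKernel_eq_one (hz : z ∈ sphere c R) (hrR : |r| < R) :
    circleAverage (fun w ↦ poissonKernel c w z) c r = 1 := by
  have hzw : ∀ w ∈ closedBall c |r|, (z - c) - (w - c) ≠ 0 := fun w hw h ↦ by
    rw [sub_eq_zero] at h
    rw [mem_sphere_iff_norm, h] at hz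
    exact (mem_closedBall_iff_norm.1 hw).not_gt (hz ▸ hrR)
  have hH : DifferentiableOn ℂ (fun w ↦ herglotzRieszKernel c w z) (closedBall c |r|) :=
    fun w hw ↦ (by fun_prop : DifferentiableAt ℂ (fun w ↦ (z - c) + (w - c)) w).div
      (by fun_prop) (hzw w hw) |>.differentiableWithinAt
  have hint : CircleIntegrable (fun w ↦ herglotzRieszKernel c w z) c r :=
    (hH.continuousOn.mono sphere_subset_closedBall).circleIntegrable'
  have hre : (fun w ↦ poissonKernel c w z) = reCLM ∘ fun w ↦ herglotzRieszKernel c w z :=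
    funext fun w ↦ congrFun poissonKernel_eq_re_herglotzRieszKernel z
  have hzc : z - c ≠ 0 := by simpa using hzw c (mem_closedBall_self (abs_nonneg r))
  rw [hre, reCLM.circleAverage_comp_comm hint, (hH.diffContOnCl_ball subset_rfl).circleAverage]
  simp [herglotzRieszKernel, hzc]

theorem norm_clm_apply_le_circleAverage_poissonKernel_smul
    {E F : Type*} [NormedAddCommGroup E] [NormedSpace ℂ E] [CompleteSpace E]
    [NormedAddCommGroup F] [NormedSpace ℝ F] [CompleteSpace F] {g : ℂ → E} (L : E →L[ℝ] F)
    (hg : DiffContOnCl ℂ g (ball c R)) (hw : w ∈ ball c R) :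
    ‖L (g w)‖ ≤ circleAverage (poissonKernel c w • fun z ↦ ‖L (g z)‖) c R := by
  have hR : 0 < R := pos_of_mem_ball hw
  have hint : CircleIntegrable (poissonKernel c w • g) c R := by
    refine ContinuousOn.circleIntegrable' ((continuousOn_poissonKernel_sphere hw).smul ?_)
    exact hg.continuousOn.mono
      (by simp [closure_ball c hR.ne', abs_of_pos hR, sphere_subset_closedBall])
  calc ‖L (g w)‖ = ‖circleAverage (L ∘ (poissonKernel c w • g)) c R‖ := by
        rw [L.circleAverage_comp_comm hint, hg.circleAverage_poissonKernel_smul hw]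
    _ ≤ circleAverage (fun z ↦ ‖L ((poissonKernel c w • g) z)‖) c R :=
        norm_circleAverage_le_circleAverage_norm _ c R
    _ = circleAverage (poissonKernel c w • fun z ↦ ‖L (g z)‖) c R := by
        refine circleAverage_congr_sphere fun z hz ↦ ?_
        rw [abs_of_pos hR] at hz
        simp [norm_smul, abs_of_nonneg (poissonKernel_nonneg hz hw)]

theorem circleAverage_le_of_le_circleAverage_poissonKernel_smul {v : ℂ → ℝ}
    (hr : 0 ≤ r) (hrR : r < R) (hv : ContinuousOn v (closedBall c R))
    (hP : ∀ w ∈ ball c R, v w ≤ circleAverage (poissonKernel c w • v) c R) :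
    circleAverage v c r ≤ circleAverage v c R := by
  have hR : 0 < R := hr.trans_lt hrR
  have hK : ContinuousOn (uncurry fun w z ↦ poissonKernel c w z * v z)
      (sphere c |r| ×ˢ sphere c |R|) := by
    refine (continuousOn_uncurry_poissonKernel (by rwa [abs_of_nonneg hr])).mul ?_
    refine hv.comp continuousOn_snd fun p hp ↦ ?_
    exact sphere_subset_closedBall (by simpa [abs_of_pos hR] using hp.2)
  calc circleAverage v c r
      ≤ circleAverage (fun w ↦ circleAverage (fun z ↦ poissonKernel c w z * v z) c R) c r := by
        refine circleAverage_mono ?_ hK.circleIntegrable_circleAverage fun w hw ↦ hP w ?_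
        · exact (hv.mono (sphere_subset_closedBall.trans (closedBall_subset_closedBall
            (by rw [abs_of_nonneg hr]; exact hrR.le)))).circleIntegrable'
        · rw [abs_of_nonneg hr] at hw
          exact sphere_subset_ball hrR hw
    _ = circleAverage (fun z ↦ v z * circleAverage (fun w ↦ poissonKernel c w z) c r) c R := by
        rw [circleAverage_circleAverage_comm hK]
        congr 1 with z
        simp_rw [mul_comm _ (v z)]
        exact circleAverage_fun_smul (𝕜 := ℝ)
    _ = circleAverage v c R := by
        refine circleAverage_congr_sphere fun z hz ↦ ?_
        rw [abs_of_pos hR] at hz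
        rw [circleAverage_poissonKernel_eq_one hz (by rwa [abs_of_nonneg hr]), mul_one]

end Poisson

theorem subharmonicOn_iff {v : ℂ → ℝ} {s : Set ℂ} :
    SubharmonicOn v s ↔ ContinuousOn v s ∧
      ∀ c ∈ s, ∀ r : ℝ, 0 < r → closedBall c r ⊆ s → v c ≤ circleAverage v c r :=
  Iff.rfl

theorem SubharmonicOn.congr {v w : ℂ → ℝ} {s : Set ℂ} (hv : SubharmonicOn v s)
    (hvw : EqOn v w s) : SubharmonicOn w s := by
  rw [subharmonicOn_iff] at hv ⊢
  refine ⟨hv.1.congr hvw.symm, fun c hc r hr hrs ↦ ?_⟩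
  rw [← hvw hc, ← circleAverage_congr_sphere (hvw.mono ?_)]
  · exact hv.2 c hc r hr hrs
  · rw [abs_of_pos hr]
    exact sphere_subset_closedBall.trans hrs

section Holomorphic

variable {E F : Type*} [NormedAddCommGroup E] [NormedSpace ℂ E] [CompleteSpace E]
  [NormedAddCommGroup F] [NormedSpace ℝ F] [CompleteSpace F] {g : ℂ → E} (L : E →L[ℝ] F)

theorem subharmonicOn_norm_clm_comp {U : Set ℂ} (hg : DifferentiableOn ℂ g U) :
    SubharmonicOn (fun z ↦ ‖L (g z)‖) U := by
  refine subharmonicOn_iff.2 ⟨(L.continuous.comp_continuousOn hg.continuousOn).norm,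
    fun c _ r hr hrU ↦ ?_⟩
  refine (norm_clm_apply_le_circleAverage_poissonKernel_smul L (hg.diffContOnCl_ball hrU)
    (mem_ball_self hr)).trans_eq (circleAverage_congr_sphere fun z hz ↦ ?_)
  have hzc : z - c ≠ 0 := sub_ne_zero.2 (ne_of_mem_sphere hz (abs_pos.2 hr.ne').ne')
  simp [poissonKernel, hzc]

theorem monotoneOn_circleAverage_norm_clm_comp {c : ℂ} {R : ℝ}
    (hg : DifferentiableOn ℂ g (ball c R)) :
    MonotoneOn (fun r ↦ circleAverage (fun z ↦ ‖L (g z)‖) c r) (Ico 0 R) := by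
  intro r hr r' hr' hrr'
  rcases hrr'.eq_or_lt with rfl | hlt
  · exact le_rfl
  have hgr' := hg.diffContOnCl_ball (closedBall_subset_ball hr'.2)
  refine circleAverage_le_of_le_circleAverage_poissonKernel_smul hr.1 hlt ?_
    fun w hw ↦ norm_clm_apply_le_circleAverage_poissonKernel_smul L hgr' hw
  exact (L.continuous.comp_continuousOn
    (hg.continuousOn.mono (closedBall_subset_ball hr'.2))).norm

end Holomorphic

theorem fderiv_apply_eq_clm_smul_deriv {E F : Type*} [NormedAddCommGroup E] [NormedSpace ℂ E]
    [NormedAddCommGroup F] [NormedSpace ℝ F] {u : ℂ → F} {f : ℂ → E} {L : E →L[ℝ] F} {z : ℂ}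
    (hf : DifferentiableAt ℂ f z) (hu : u =ᶠ[nhds z] L ∘ f) (v : ℂ) :
    fderiv ℝ u z v = L (v • deriv f z) := by
  have hLf : HasFDerivAt (L ∘ f) (L.comp ((fderiv ℂ f z).restrictScalars ℝ)) z :=
    L.hasFDerivAt.comp z (hf.hasFDerivAt.restrictScalars ℝ)
  rw [(hLf.congr_of_eventuallyEq hu).fderiv]
  simp only [ContinuousLinearMap.comp_apply, ContinuousLinearMap.coe_restrictScalars',
    fderiv_eq_smul_deriv]

theorem Metric.monotoneOn_diam_image_ball {X Y : Type*} [PseudoMetricSpace X] [ProperSpace X]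
    [PseudoMetricSpace Y] {u : X → Y} {c : X} {R : ℝ} (hu : ContinuousOn u (ball c R)) :
    MonotoneOn (fun r ↦ diam (u '' ball c r)) (Iio R) := fun _ _ r' hr' hrr' ↦
  diam_mono (image_mono (ball_subset_ball hrr')) <|
    ((isCompact_closedBall c r').image_of_continuousOn (hu.mono (closedBall_subset_ball hr'))
      |>.isBounded.subset (image_mono ball_subset_closedBall))

noncomputable def EuclideanSpace.reCLM (ι : Type*) [Fintype ι] :
    EuclideanSpace ℂ ι →L[ℝ] EuclideanSpace ℝ ι :=
  LinearMap.toContinuousLinearMap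
    { toFun := fun v ↦ WithLp.toLp 2 fun i ↦ (v i).re
      map_add' := fun v w ↦ by ext i; simp
      map_smul' := fun a v ↦ by ext i; simp }

/-- If `u : 𝔻 → ℝ^m` is harmonic, then `|u|` and `|u'_t|` (norm of the angular
derivative) are subharmonic, and consequently the length `L(r)` of `t ↦ u(re^{it})`
and the diameter `d(r)` of `u(D_r)` are nondecreasing in `r ∈ [0,1)`. -/
theorem subharmonic_length_diam_monotone (m : ℕ) (u : ℂ → EuclideanSpace ℝ (Fin m))
    (F : ℂ → EuclideanSpace ℂ (Fin m))
    (hF : DifferentiableOn ℂ F (Metric.ball 0 1))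
    (hre : ∀ z ∈ Metric.ball (0 : ℂ) 1, ∀ i, u z i = (F z i).re) :
    SubharmonicOn (fun z => ‖u z‖) (Metric.ball 0 1) ∧
    SubharmonicOn (fun z => ‖fderiv ℝ u z (Complex.I * z)‖) (Metric.ball 0 1) ∧
    MonotoneOn (fun r : ℝ =>
        ∫ t in (0 : ℝ)..(2 * Real.pi),
          ‖fderiv ℝ u ((r : ℂ) * Complex.exp (t * Complex.I))
              (Complex.I * ((r : ℂ) * Complex.exp (t * Complex.I)))‖)
      (Set.Ico (0 : ℝ) 1) ∧
    MonotoneOn (fun r : ℝ => Metric.diam (u '' Metric.ball 0 r)) (Set.Ico (0 : ℝ) 1) := by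
  set L := EuclideanSpace.reCLM (Fin m)
  have hu : EqOn u (L ∘ F) (ball 0 1) := fun z hz ↦ by ext i; exact hre z hz i
  set G : ℂ → EuclideanSpace ℂ (Fin m) := fun z ↦ (I * z) • deriv F z
  have hG : DifferentiableOn ℂ G (ball 0 1) :=
    (differentiableOn_id.const_mul I).smul (hF.analyticOnNhd isOpen_ball).deriv.differentiableOn
  have hangular : EqOn (fun z ↦ ‖fderiv ℝ u z (I * z)‖) (fun z ↦ ‖L (G z)‖) (ball 0 1) :=
    fun z hz ↦ congrArg norm <| fderiv_apply_eq_clm_smul_deriv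
      (hF.differentiableAt (isOpen_ball.mem_nhds hz))
      (Filter.eventually_of_mem (isOpen_ball.mem_nhds hz) hu) _
  refine ⟨(subharmonicOn_norm_clm_comp L hF).congr fun z hz ↦ by simp [hu hz],
    (subharmonicOn_norm_clm_comp L hG).congr hangular.symm, ?_,
    (monotoneOn_diam_image_ball ((L.continuous.comp_continuousOn hF.continuousOn).congr hu)).mono
      Ico_subset_Iio_self⟩
  refine MonotoneOn.congr (f₁ := fun r ↦ (2 * π) • circleAverage (fun z ↦ ‖L (G z)‖) 0 r)
    (fun a ha b hb hab ↦ smul_le_smul_of_nonneg_left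
      (monotoneOn_circleAverage_norm_clm_comp L hG ha hb hab) two_pi_pos.le) fun r hr ↦ ?_
  have hsphere : sphere (0 : ℂ) |r| ⊆ ball 0 1 :=
    sphere_subset_ball (by rw [abs_of_nonneg hr.1]; exact hr.2)
  dsimp only
  rw [← circleAverage_congr_sphere (hangular.mono hsphere)]
  exact (intervalIntegral_mul_exp_eq_two_pi_smul_circleAverage _ r).symm
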